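/- Let A be an associative unital algebra over ℂ with a full comultiplication Δ, and assume there exist a faithful left integral φ and a faithful right integral on A. If elements a₁, …, aₙ, b₁, …, bₙ ∈ A satisfy Σᵢ (id ⊗ φ)(Δ(aᵢ)(1 ⊗ bᵢ)) = 0, then Σᵢ (id ⊗ φ)((1 ⊗ aᵢ)Δ(bᵢ)) = 0. -/

import Mathlib

/-!
Put `𝔗 = Σᵢ (id ⊗ id ⊗ φ)(Δ(aᵢ)₁₃ Δ(bᵢ)₂₃)`. Slicing the first leg of `𝔗` with `ψ(p ·)` and using,
in turn, right invariance of `ψ`, coassociativity and left invariance of `φ` gives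
`(ψ ⊗ id)(Δ(p)(x ⊗ 1))` with `x = Σᵢ (id ⊗ φ)(Δ(aᵢ)(1 ⊗ bᵢ)) = 0`. Since `ψ` is faithful, these
slices separate the points of `A ⊗ A`, so `𝔗 = 0`. On the other hand, for any functional `χ` with
`χ(1) = 1`, coassociativity and left invariance of `φ` give
`Σᵢ (id ⊗ φ)((1 ⊗ aᵢ)Δ(bᵢ)) = (id ⊗ χ)(T₂' 𝔗)`.
-/

open TensorProduct

noncomputable section

variable {A : Type*} [Ring A] [Algebra ℂ A]

/-- The slice map `id ⊗ ω : A ⊗ A → A`. -/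
def sliceR (ω : A →ₗ[ℂ] ℂ) : A ⊗[ℂ] A →ₗ[ℂ] A :=
  (TensorProduct.rid ℂ A).toLinearMap ∘ₗ TensorProduct.map LinearMap.id ω

/-- The slice map `ω ⊗ id : A ⊗ A → A`. -/
def sliceL (ω : A →ₗ[ℂ] ℂ) : A ⊗[ℂ] A →ₗ[ℂ] A :=
  (TensorProduct.lid ℂ A).toLinearMap ∘ₗ TensorProduct.map ω LinearMap.id

/-- Coassociativity of a comultiplication `Δ : A → A ⊗ A`:
`(Δ ⊗ id) ∘ Δ = (id ⊗ Δ) ∘ Δ` (up to the associator). -/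
def IsCoassoc (Δ : A →ₐ[ℂ] A ⊗[ℂ] A) : Prop :=
  ∀ a : A,
    TensorProduct.assoc ℂ A A A (TensorProduct.map Δ.toLinearMap LinearMap.id (Δ a)) =
      TensorProduct.map LinearMap.id Δ.toLinearMap (Δ a)

/-- A left integral: a nonzero functional with `(id ⊗ φ)(Δ a) = φ(a)·1` for all `a`. -/
def IsLeftIntegral (Δ : A →ₐ[ℂ] A ⊗[ℂ] A) (φ : A →ₗ[ℂ] ℂ) : Prop :=
  φ ≠ 0 ∧ ∀ a : A, sliceR φ (Δ a) = φ a • (1 : A)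

/-- A right integral: a nonzero functional with `(ψ ⊗ id)(Δ a) = ψ(a)·1` for all `a`. -/
def IsRightIntegral (Δ : A →ₐ[ℂ] A ⊗[ℂ] A) (ψ : A →ₗ[ℂ] ℂ) : Prop :=
  ψ ≠ 0 ∧ ∀ a : A, sliceL ψ (Δ a) = ψ a • (1 : A)

/-- A faithful functional: the bilinear form `(a, b) ↦ ω(ab)` is non-degenerate. -/
def IsFaithful (ω : A →ₗ[ℂ] ℂ) : Prop :=
  (∀ b : A, (∀ a : A, ω (a * b) = 0) → b = 0) ∧
  (∀ b : A, (∀ a : A, ω (b * a) = 0) → b = 0)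

/-- The left leg of an element `x ∈ A ⊗ A`: the span of `{(id ⊗ ω)(x) : ω ∈ A*}`. -/
def leftLegOf (x : A ⊗[ℂ] A) : Submodule ℂ A :=
  Submodule.span ℂ {y : A | ∃ ω : A →ₗ[ℂ] ℂ, y = sliceR ω x}

/-- The right leg of an element `x ∈ A ⊗ A`: the span of `{(ω ⊗ id)(x) : ω ∈ A*}`. -/
def rightLegOf (x : A ⊗[ℂ] A) : Submodule ℂ A :=
  Submodule.span ℂ {y : A | ∃ ω : A →ₗ[ℂ] ℂ, y = sliceL ω x}

/-- The left leg of `Δ`: the span of `{(id ⊗ ω)(Δ a) : a ∈ A, ω ∈ A*}`. -/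
def leftLeg (Δ : A →ₐ[ℂ] A ⊗[ℂ] A) : Submodule ℂ A :=
  Submodule.span ℂ {y : A | ∃ (a : A) (ω : A →ₗ[ℂ] ℂ), y = sliceR ω (Δ a)}

/-- The right leg of `Δ`: the span of `{(ω ⊗ id)(Δ a) : a ∈ A, ω ∈ A*}`. -/
def rightLeg (Δ : A →ₐ[ℂ] A ⊗[ℂ] A) : Submodule ℂ A :=
  Submodule.span ℂ {y : A | ∃ (a : A) (ω : A →ₗ[ℂ] ℂ), y = sliceL ω (Δ a)}

/-- A comultiplication is full if both of its legs are all of `A`. -/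
def IsFull (Δ : A →ₐ[ℂ] A ⊗[ℂ] A) : Prop :=
  leftLeg Δ = ⊤ ∧ rightLeg Δ = ⊤

/-- The linear map `T₁` with `T₁ (a ⊗ b) = Δ(a) * (1 ⊗ b)`. -/
def T1 (Δ : A →ₐ[ℂ] A ⊗[ℂ] A) : A ⊗[ℂ] A →ₗ[ℂ] A ⊗[ℂ] A :=
  LinearMap.mul' ℂ (A ⊗[ℂ] A) ∘ₗ
    TensorProduct.map Δ.toLinearMap (TensorProduct.mk ℂ A A 1)

/-- The linear map `T₁'` with `T₁' (a ⊗ b) = Δ(a) * (b ⊗ 1)`. -/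
def T1' (Δ : A →ₐ[ℂ] A ⊗[ℂ] A) : A ⊗[ℂ] A →ₗ[ℂ] A ⊗[ℂ] A :=
  LinearMap.mul' ℂ (A ⊗[ℂ] A) ∘ₗ
    TensorProduct.map Δ.toLinearMap ((TensorProduct.mk ℂ A A).flip 1)

/-- The linear map `T₂` with `T₂ (a ⊗ b) = (a ⊗ 1) * Δ(b)`. -/
def T2 (Δ : A →ₐ[ℂ] A ⊗[ℂ] A) : A ⊗[ℂ] A →ₗ[ℂ] A ⊗[ℂ] A :=
  LinearMap.mul' ℂ (A ⊗[ℂ] A) ∘ₗ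
    TensorProduct.map ((TensorProduct.mk ℂ A A).flip 1) Δ.toLinearMap

/-- The linear map `T₂'` with `T₂' (a ⊗ b) = (1 ⊗ a) * Δ(b)`. -/
def T2' (Δ : A →ₐ[ℂ] A ⊗[ℂ] A) : A ⊗[ℂ] A →ₗ[ℂ] A ⊗[ℂ] A :=
  LinearMap.mul' ℂ (A ⊗[ℂ] A) ∘ₗ
    TensorProduct.map (TensorProduct.mk ℂ A A 1) Δ.toLinearMap

/-- A left cointegral: a nonzero element `h` with `Δ(a)(1 ⊗ h) = a ⊗ h` for all `a`. -/
def IsLeftCointegral (Δ : A →ₐ[ℂ] A ⊗[ℂ] A) (h : A) : Prop :=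
  h ≠ 0 ∧ ∀ a : A, Δ a * ((1 : A) ⊗ₜ[ℂ] h) = a ⊗ₜ[ℂ] h

/-- A right cointegral: a nonzero element `k` with `(k ⊗ 1)Δ(a) = k ⊗ a` for all `a`. -/
def IsRightCointegral (Δ : A →ₐ[ℂ] A ⊗[ℂ] A) (k : A) : Prop :=
  k ≠ 0 ∧ ∀ a : A, (k ⊗ₜ[ℂ] (1 : A)) * Δ a = k ⊗ₜ[ℂ] a

/-- `Δ₁₃(a) = (1 ⊗ σ)(Δ(a) ⊗ 1)`, viewed in `A ⊗ (A ⊗ A)`. -/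
def delta13 (Δ : A →ₐ[ℂ] A ⊗[ℂ] A) (a : A) : A ⊗[ℂ] (A ⊗[ℂ] A) :=
  TensorProduct.map LinearMap.id (TensorProduct.comm ℂ A A).toLinearMap
    (TensorProduct.assoc ℂ A A A (Δ a ⊗ₜ[ℂ] (1 : A)))

open LinearMap

section Slices

variable (ω θ : A →ₗ[ℂ] ℂ)

@[simp] lemma sliceR_tmul (x y : A) : sliceR ω (x ⊗ₜ[ℂ] y) = ω y • x := by
  simp [sliceR]

@[simp] lemma sliceL_tmul (x y : A) : sliceL ω (x ⊗ₜ[ℂ] y) = ω x • y := by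
  simp [sliceL]

lemma apply_sliceL (t : A ⊗[ℂ] A) : θ (sliceL ω t) = ω (sliceR θ t) := by
  induction t using TensorProduct.induction_on with
  | zero => simp
  | tmul x y => simp [mul_comm]
  | add t t' ht ht' => simp [ht, ht']

lemma sliceR_tmul_one_mul (x : A) (t : A ⊗[ℂ] A) :
    sliceR ω ((x ⊗ₜ[ℂ] (1 : A)) * t) = x * sliceR ω t := by
  induction t using TensorProduct.induction_on with
  | zero => simp
  | tmul y z => simp [Algebra.TensorProduct.tmul_mul_tmul]
  | add t t' ht ht' => simp [mul_add, ht, ht']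

lemma sliceR_one_tmul_mul (x : A) (t : A ⊗[ℂ] A) :
    sliceR ω (((1 : A) ⊗ₜ[ℂ] x) * t) = sliceR (ω ∘ₗ mulLeft ℂ x) t := by
  induction t using TensorProduct.induction_on with
  | zero => simp
  | tmul y z => simp [Algebra.TensorProduct.tmul_mul_tmul]
  | add t t' ht ht' => simp [mul_add, ht, ht']

lemma sliceL_tmul_one_mul (x : A) (t : A ⊗[ℂ] A) :
    sliceL ω ((x ⊗ₜ[ℂ] (1 : A)) * t) = sliceL (ω ∘ₗ mulLeft ℂ x) t := by
  induction t using TensorProduct.induction_on with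
  | zero => simp
  | tmul y z => simp [Algebra.TensorProduct.tmul_mul_tmul]
  | add t t' ht ht' => simp [mul_add, ht, ht']

lemma sliceL_mul_one_tmul (t : A ⊗[ℂ] A) (x : A) :
    sliceL ω (t * ((1 : A) ⊗ₜ[ℂ] x)) = sliceL ω t * x := by
  induction t using TensorProduct.induction_on with
  | zero => simp
  | tmul y z => simp [Algebra.TensorProduct.tmul_mul_tmul]
  | add t t' ht ht' => simp [add_mul, ht, ht']

lemma map_sliceL_id_tmul_one_mul_assoc_symm (P : A ⊗[ℂ] A) (z : A) (s : A ⊗[ℂ] A) :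
    TensorProduct.map (sliceL ω) LinearMap.id
        ((P ⊗ₜ[ℂ] (1 : A)) * (TensorProduct.assoc ℂ A A A).symm (z ⊗ₜ[ℂ] s)) =
      (sliceL ω (P * (z ⊗ₜ[ℂ] (1 : A))) ⊗ₜ[ℂ] (1 : A)) * s := by
  induction s using TensorProduct.induction_on with
  | zero => simp
  | tmul u v =>
    have hzu : z ⊗ₜ[ℂ] u = (z ⊗ₜ[ℂ] (1 : A)) * ((1 : A) ⊗ₜ[ℂ] u) := by
      simp [Algebra.TensorProduct.tmul_mul_tmul]
    rw [TensorProduct.assoc_symm_tmul, Algebra.TensorProduct.tmul_mul_tmul, one_mul,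
      TensorProduct.map_tmul, LinearMap.id_apply, hzu, ← mul_assoc, sliceL_mul_one_tmul,
      Algebra.TensorProduct.tmul_mul_tmul, one_mul]
  | add s s' hs hs' => simp [tmul_add, mul_add, hs, hs']

lemma eq_zero_of_forall_sliceR_eq_zero {t : A ⊗[ℂ] A} (h : ∀ ω : A →ₗ[ℂ] ℂ, sliceR ω t = 0) :
    t = 0 := by
  classical
  let B := Module.Basis.ofVectorSpace ℂ A
  refine (TensorProduct.equivFinsuppOfBasisRight B).map_eq_zero_iff.mp (Finsupp.ext fun i => ?_)
  rw [TensorProduct.equivFinsuppOfBasisRight_apply]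
  exact h (B.coord i)

lemma eq_zero_of_forall_sliceL_mulLeft_eq_zero {ψ : A →ₗ[ℂ] ℂ}
    (hψ : ∀ y : A, (∀ x : A, ψ (x * y) = 0) → y = 0) {t : A ⊗[ℂ] A}
    (h : ∀ p : A, sliceL (ψ ∘ₗ mulLeft ℂ p) t = 0) : t = 0 :=
  eq_zero_of_forall_sliceR_eq_zero fun ω => hψ _ fun p => by
    simpa [apply_sliceL] using congrArg ω (h p)

end Slices

/-- `sliceThird φ (s ⊗ t) = (id ⊗ id ⊗ φ)(s₁₃ t₂₃)`. -/
def sliceThird (φ : A →ₗ[ℂ] ℂ) : (A ⊗[ℂ] A) ⊗[ℂ] (A ⊗[ℂ] A) →ₗ[ℂ] A ⊗[ℂ] A :=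
  (TensorProduct.rid ℂ (A ⊗[ℂ] A)).toLinearMap ∘ₗ
    TensorProduct.map LinearMap.id (φ ∘ₗ LinearMap.mul' ℂ A) ∘ₗ
    (TensorProduct.tensorTensorTensorComm ℂ A A A A).toLinearMap

@[simp] lemma sliceThird_tmul (φ : A →ₗ[ℂ] ℂ) (z w u v : A) :
    sliceThird φ ((z ⊗ₜ[ℂ] w) ⊗ₜ[ℂ] (u ⊗ₜ[ℂ] v)) = φ (w * v) • (z ⊗ₜ[ℂ] u) := by
  simp [sliceThird]

lemma sliceL_sliceThird (φ ω : A →ₗ[ℂ] ℂ) (s t : A ⊗[ℂ] A) :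
    sliceL ω (sliceThird φ (s ⊗ₜ[ℂ] t)) = sliceR φ (((1 : A) ⊗ₜ[ℂ] sliceL ω s) * t) := by
  induction s using TensorProduct.induction_on with
  | zero => simp
  | tmul z w =>
    induction t using TensorProduct.induction_on with
    | zero => simp
    | tmul u v => simp [Algebra.TensorProduct.tmul_mul_tmul, smul_smul, mul_comm]
    | add t t' ht ht' => simp [tmul_add, mul_add, ht, ht']
  | add s s' hs hs' => simp [add_tmul, tmul_add, add_mul, hs, hs']

section Comultiplication

variable (Δ : A →ₐ[ℂ] A ⊗[ℂ] A)

@[simp] lemma T1_tmul (a b : A) : T1 Δ (a ⊗ₜ[ℂ] b) = Δ a * ((1 : A) ⊗ₜ[ℂ] b) := by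
  simp [T1]

@[simp] lemma T2'_tmul (a b : A) : T2' Δ (a ⊗ₜ[ℂ] b) = ((1 : A) ⊗ₜ[ℂ] a) * Δ b := by
  simp [T2']

lemma map_comul_id_tmul_one_mul (p : A) (t : A ⊗[ℂ] A) :
    TensorProduct.map Δ.toLinearMap LinearMap.id ((p ⊗ₜ[ℂ] (1 : A)) * t) =
      (Δ p ⊗ₜ[ℂ] (1 : A)) * TensorProduct.map Δ.toLinearMap LinearMap.id t :=
  map_mul (Algebra.TensorProduct.map Δ (AlgHom.id ℂ A)) _ t

lemma map_sliceL_id_map_comul_id {ψ : A →ₗ[ℂ] ℂ} (hψ : ∀ a, sliceL ψ (Δ a) = ψ a • (1 : A))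
    (t : A ⊗[ℂ] A) :
    TensorProduct.map (sliceL ψ) LinearMap.id (TensorProduct.map Δ.toLinearMap LinearMap.id t) =
      (1 : A) ⊗ₜ[ℂ] sliceL ψ t := by
  induction t using TensorProduct.induction_on with
  | zero => simp
  | tmul z w => simp [hψ, smul_tmul]
  | add t t' ht ht' => simp [tmul_add, ht, ht']

lemma sliceR_T2'_sliceThird (χ φ : A →ₗ[ℂ] ℂ) (s t : A ⊗[ℂ] A) :
    sliceR χ (T2' Δ (sliceThird φ (s ⊗ₜ[ℂ] t))) =
      TensorProduct.rid ℂ A (TensorProduct.map LinearMap.id (χ ∘ₗ sliceR φ ∘ₗ mulLeft ℂ s)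
        (TensorProduct.assoc ℂ A A A (TensorProduct.map Δ.toLinearMap LinearMap.id t))) := by
  induction t using TensorProduct.induction_on with
  | zero => simp
  | tmul u v =>
    induction s using TensorProduct.induction_on with
    | zero => simp
    | tmul z w =>
      simp only [sliceThird_tmul, map_smul, T2'_tmul, TensorProduct.map_tmul,
        AlgHom.toLinearMap_apply, LinearMap.id_apply]
      induction Δ u using TensorProduct.induction_on with
      | zero => simp
      | tmul u₁ u₂ => simp [Algebra.TensorProduct.tmul_mul_tmul, smul_smul, mul_comm]
      | add U U' hU hU' => simp [mul_add, add_tmul, hU, hU']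
    | add s s' hs hs' =>
      have hmul : mulLeft ℂ (s + s') = mulLeft ℂ s + mulLeft ℂ s' := by ext; simp [add_mul]
      simp [add_tmul, hs, hs', hmul, comp_add, map_add_right]
  | add t t' ht ht' => simp [tmul_add, ht, ht']

variable {Δ}

lemma IsCoassoc.map_comul_id_comul (hΔ : IsCoassoc Δ) (a : A) :
    TensorProduct.map Δ.toLinearMap LinearMap.id (Δ a) =
      (TensorProduct.assoc ℂ A A A).symm (TensorProduct.map LinearMap.id Δ.toLinearMap (Δ a)) := by
  rw [← hΔ a, LinearEquiv.symm_apply_apply]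

lemma sliceR_map_sliceL_id_mul_comul {φ : A →ₗ[ℂ] ℂ}
    (hφ : ∀ a, sliceR φ (Δ a) = φ a • (1 : A)) (ψ : A →ₗ[ℂ] ℂ) (P u : A ⊗[ℂ] A) (b : A) :
    sliceR φ (TensorProduct.map (sliceL ψ) LinearMap.id ((P ⊗ₜ[ℂ] (1 : A)) *
        (TensorProduct.assoc ℂ A A A).symm (TensorProduct.map LinearMap.id Δ.toLinearMap u)) *
        Δ b) =
      sliceL ψ (P * (sliceR φ (u * ((1 : A) ⊗ₜ[ℂ] b)) ⊗ₜ[ℂ] (1 : A))) := by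
  induction u using TensorProduct.induction_on with
  | zero => simp
  | tmul z w =>
    rw [TensorProduct.map_tmul, LinearMap.id_apply, AlgHom.toLinearMap_apply,
      map_sliceL_id_tmul_one_mul_assoc_symm, mul_assoc, ← map_mul, sliceR_tmul_one_mul, hφ,
      Algebra.TensorProduct.tmul_mul_tmul, mul_one, sliceR_tmul, ← smul_tmul', mul_smul_comm,
      mul_smul_comm, map_smul, mul_one]
  | add u u' hu hu' => simp [mul_add, add_mul, add_tmul, hu, hu']

lemma sliceL_mulLeft_sliceThird_map_comul (hΔ : IsCoassoc Δ) {φ ψ : A →ₗ[ℂ] ℂ}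
    (hφ : ∀ a, sliceR φ (Δ a) = φ a • (1 : A)) (hψ : ∀ a, sliceL ψ (Δ a) = ψ a • (1 : A))
    (p : A) (x : A ⊗[ℂ] A) :
    sliceL (ψ ∘ₗ mulLeft ℂ p)
        (sliceThird φ (TensorProduct.map Δ.toLinearMap Δ.toLinearMap x)) =
      sliceL ψ (Δ p * (sliceR φ (T1 Δ x) ⊗ₜ[ℂ] (1 : A))) := by
  induction x using TensorProduct.induction_on with
  | zero => simp
  | tmul a b =>
    rw [TensorProduct.map_tmul, AlgHom.toLinearMap_apply, AlgHom.toLinearMap_apply,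
      sliceL_sliceThird, ← sliceL_tmul_one_mul, ← map_sliceL_id_map_comul_id Δ hψ,
      map_comul_id_tmul_one_mul, hΔ.map_comul_id_comul, sliceR_map_sliceL_id_mul_comul hφ,
      T1_tmul]
  | add x x' hx hx' => simp [add_tmul, mul_add, hx, hx']

lemma sliceR_T2'_sliceThird_map_comul (hΔ : IsCoassoc Δ) {φ χ : A →ₗ[ℂ] ℂ}
    (hφ : ∀ a, sliceR φ (Δ a) = φ a • (1 : A)) (hχ : χ 1 = 1) (x : A ⊗[ℂ] A) :
    sliceR χ (T2' Δ (sliceThird φ (TensorProduct.map Δ.toLinearMap Δ.toLinearMap x))) =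
      sliceR φ (T2' Δ x) := by
  induction x using TensorProduct.induction_on with
  | zero => simp
  | tmul a b =>
    have hκ : χ ∘ₗ sliceR φ ∘ₗ mulLeft ℂ (Δ a) ∘ₗ Δ.toLinearMap = φ ∘ₗ mulLeft ℂ a := by
      ext v
      simp [← map_mul, hφ, hχ]
    rw [TensorProduct.map_tmul, AlgHom.toLinearMap_apply, AlgHom.toLinearMap_apply,
      sliceR_T2'_sliceThird, hΔ b, T2'_tmul, sliceR_one_tmul_mul, ← hκ,
      TensorProduct.map_map, LinearMap.id_comp]
    rfl
  | add x x' hx hx' => simp [hx, hx']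

lemma sliceR_T2'_eq_zero_of_sliceR_T1_eq_zero (hΔ : IsCoassoc Δ) {φ ψ : A →ₗ[ℂ] ℂ}
    (hφ : ∀ a, sliceR φ (Δ a) = φ a • (1 : A)) (hψ : ∀ a, sliceL ψ (Δ a) = ψ a • (1 : A))
    (hψf : ∀ y : A, (∀ x : A, ψ (x * y) = 0) → y = 0) {x : A ⊗[ℂ] A}
    (hx : sliceR φ (T1 Δ x) = 0) : sliceR φ (T2' Δ x) = 0 := by
  nontriviality A
  obtain ⟨χ, hχ⟩ := Module.Projective.exists_dual_eq_one ℂ (one_ne_zero : (1 : A) ≠ 0)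
  have hT : sliceThird φ (TensorProduct.map Δ.toLinearMap Δ.toLinearMap x) = 0 :=
    eq_zero_of_forall_sliceL_mulLeft_eq_zero hψf fun p => by
      rw [sliceL_mulLeft_sliceThird_map_comul hΔ hφ hψ, hx, zero_tmul, mul_zero, map_zero]
  rw [← sliceR_T2'_sliceThird_map_comul hΔ hφ hχ, hT, map_zero, map_zero]

end Comultiplication

theorem antipode_well_defined_lemma_general
    (Δ : A →ₐ[ℂ] A ⊗[ℂ] A) (hΔ : IsCoassoc Δ)
    (φ : A →ₗ[ℂ] ℂ) (hφ : IsLeftIntegral Δ φ)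
    (ψ : A →ₗ[ℂ] ℂ) (hψ : IsRightIntegral Δ ψ) (hψf : IsFaithful ψ)
    (n : ℕ) (a b : Fin n → A)
    (h0 : ∑ i, sliceR φ (Δ (a i) * ((1 : A) ⊗ₜ[ℂ] b i)) = 0) :
    ∑ i, sliceR φ (((1 : A) ⊗ₜ[ℂ] a i) * Δ (b i)) = 0 := by
  have h := sliceR_T2'_eq_zero_of_sliceR_T1_eq_zero hΔ hφ.2 hψ.2 hψf.1
    (x := ∑ i, a i ⊗ₜ[ℂ] b i) (by simpa [map_sum] using h0)
  simpa [map_sum] using h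

/-- If `Σᵢ (id ⊗ φ)(Δ(aᵢ)(1 ⊗ bᵢ)) = 0`, then `Σᵢ (id ⊗ φ)((1 ⊗ aᵢ)Δ(bᵢ)) = 0`. -/
theorem antipode_well_defined_lemma
    (Δ : A →ₐ[ℂ] A ⊗[ℂ] A) (hΔ : IsCoassoc Δ) (hfull : IsFull Δ)
    (φ : A →ₗ[ℂ] ℂ) (hφ : IsLeftIntegral Δ φ) (hφf : IsFaithful φ)
    (ψ : A →ₗ[ℂ] ℂ) (hψ : IsRightIntegral Δ ψ) (hψf : IsFaithful ψ)
    (n : ℕ) (a b : Fin n → A)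
    (h0 : ∑ i, sliceR φ (Δ (a i) * ((1 : A) ⊗ₜ[ℂ] b i)) = 0) :
    ∑ i, sliceR φ (((1 : A) ⊗ₜ[ℂ] a i) * Δ (b i)) = 0 :=
  antipode_well_defined_lemma_general Δ hΔ φ hφ ψ hψ hψf n a b h0
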